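/- arXiv:1711.01418 — 4 statements merged into one kernel-verified Lean document; each statement's English description precedes it below -/
import Mathlib

section
/- Let u, v be vectors in R^d with nonnegative inner product u·v ≥ 0. Then the Euclidean norm of the componentwise (Hadamard) product u∘v satisfies ‖u∘v‖₂ ≤ 0.36 · ‖u+v‖₂². -/
/-- If u·v ≥ 0 then ‖u∘v‖₂ ≤ 0.36·‖u+v‖₂². -/
theorem hadamard_norm_bound (d : ℕ) (u v : Fin d → ℝ)
    (h : 0 ≤ ∑ i, u i * v i) :
    Real.sqrt (∑ i, (u i * v i) ^ 2) ≤
      0.36 * (Real.sqrt (∑ i, (u i + v i) ^ 2)) ^ 2 := by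
  set S : ℝ := ∑ i, (u i + v i) ^ 2 with hSdef
  have hS0 : 0 ≤ S := Finset.sum_nonneg fun i _ => sq_nonneg _
  have hsplit : S = ∑ i, (u i ^ 2 + v i ^ 2) + 2 * ∑ i, u i * v i := by
    rw [hSdef, Finset.mul_sum, ← Finset.sum_add_distrib]
    exact Finset.sum_congr rfl fun i _ => by ring
  have hsplit' : ∑ i, (u i - v i) ^ 2 = S - 4 * ∑ i, u i * v i := by
    rw [hSdef, Finset.mul_sum, ← Finset.sum_sub_distrib]
    exact Finset.sum_congr rfl fun i _ => by ring
  have hA : ∑ i, (u i ^ 2 + v i ^ 2) ≤ S := by linarith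
  have hB : ∀ i, |u i * v i| ≤ S / 4 := by
    intro i
    rcases le_or_gt 0 (u i * v i) with hp | hn
    · rw [abs_of_nonneg hp]
      have h1 : (u i + v i) ^ 2 ≤ S := by
        rw [hSdef]
        exact Finset.single_le_sum (f := fun j => (u j + v j) ^ 2)
          (fun j _ => sq_nonneg _) (Finset.mem_univ i)
      nlinarith [sq_nonneg (u i - v i)]
    · rw [abs_of_neg hn]
      have h1 : (u i - v i) ^ 2 ≤ ∑ j, (u j - v j) ^ 2 :=
        Finset.single_le_sum (f := fun j => (u j - v j) ^ 2)
          (fun j _ => sq_nonneg _) (Finset.mem_univ i)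
      rw [hsplit'] at h1
      nlinarith [sq_nonneg (u i + v i)]
  have hpt : ∀ i, (u i * v i) ^ 2 ≤ S / 4 * ((u i ^ 2 + v i ^ 2) / 2) := by
    intro i
    have h1 : |u i * v i| ≤ (u i ^ 2 + v i ^ 2) / 2 := by
      rw [abs_mul]
      nlinarith [sq_nonneg (|u i| - |v i|), sq_abs (u i), sq_abs (v i),
        abs_nonneg (u i), abs_nonneg (v i)]
    have h2 : (u i * v i) ^ 2 = |u i * v i| * |u i * v i| := by
      rw [← sq_abs (u i * v i)]; ring
    rw [h2]
    exact mul_le_mul (hB i) h1 (abs_nonneg _) (by linarith [hS0])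
  have hsum : ∑ i, (u i * v i) ^ 2 ≤ S ^ 2 / 8 := by
    calc ∑ i, (u i * v i) ^ 2
        ≤ ∑ i, S / 4 * ((u i ^ 2 + v i ^ 2) / 2) :=
          Finset.sum_le_sum fun i _ => hpt i
      _ = S / 8 * ∑ i, (u i ^ 2 + v i ^ 2) := by
          rw [Finset.mul_sum]; exact Finset.sum_congr rfl fun i _ => by ring
      _ ≤ S / 8 * S := by
          apply mul_le_mul_of_nonneg_left hA; positivity
      _ = S ^ 2 / 8 := by ring
  have key : Real.sqrt (∑ i, (u i * v i) ^ 2) ≤ 0.36 * S := by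
    calc Real.sqrt (∑ i, (u i * v i) ^ 2)
        ≤ Real.sqrt ((0.36 * S) ^ 2) := Real.sqrt_le_sqrt (by nlinarith [sq_nonneg S])
      _ = 0.36 * S := Real.sqrt_sq (by positivity)
  rwa [Real.sq_sqrt hS0]
end

section
/- Let V ∈ R^{a×a} and W ∈ R^{b×b} be symmetric positive definite, and G ∈ R^{b×a}. Then the block matrix M = [[V, Gᵀ],[G, −W]] is invertible and ‖M⁻¹‖₂ ≤ max{‖V⁻¹‖₂, ‖W⁻¹‖₂}. -/
/-!
Write `x = (u, v)` and flip the sign of the second block, `Jx = (u, -v)`. The off-diagonal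
blocks `Gᵀ` and `G` then cancel in `⟪Mx, Jx⟫ = uᵀVu + vᵀWv`. For a positive definite `P`,
expanding `0 ≤ ⟪P⁻¹w, w⟫` at `w = u - ‖P⁻¹‖ Pu` gives `‖u‖² ≤ ‖P⁻¹‖ uᵀPu`. Hence, with
`c = max ‖V⁻¹‖ ‖W⁻¹‖` and since `J` is an isometry, `‖x‖² ≤ c ⟪Mx, Jx⟫ ≤ c ‖Mx‖ ‖x‖`, so
`‖x‖ ≤ c ‖Mx‖`: `M` is injective, hence invertible, and `‖M⁻¹‖ ≤ c`.
-/

open Matrix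

/-- Spectral (operator 2-) norm of a real matrix. -/
noncomputable def specNorm {m n : Type*} [Fintype m] [Fintype n] [DecidableEq n]
    (A : Matrix m n ℝ) : ℝ :=
  ‖(Matrix.toEuclideanLin A).toContinuousLinearMap‖

open scoped RealInnerProductSpace
open WithLp

theorem ContinuousLinearMap.IsPositive.norm_sq_le_opNorm_mul_inner {E : Type*}
    [NormedAddCommGroup E] [InnerProductSpace ℝ E] {S T : E →L[ℝ] E} (hS : S.IsPositive)
    (hST : Function.LeftInverse S T) (u : E) : ‖u‖ ^ 2 ≤ ‖S‖ * ⟪T u, u⟫ := by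
  have hSu : ⟪S u, u⟫ ≤ ‖S‖ * ‖u‖ ^ 2 := by
    rw [sq, ← mul_assoc]
    exact (real_inner_le_norm _ _).trans (by gcongr; exact S.le_opNorm u)
  have hw := hS.inner_nonneg_left (u - ‖S‖ • T u)
  simp only [map_sub, map_smul, inner_sub_left, inner_sub_right, inner_smul_left,
    inner_smul_right, hS.inner_left_eq_inner_right u (T u), hST u, real_inner_self_eq_norm_sq,
    real_inner_comm (T u) u, RCLike.conj_to_real] at hw
  rcases (norm_nonneg S).eq_or_lt with hS0 | hS0
  · have hu : u = 0 := by rw [← hST u, norm_eq_zero.mp hS0.symm, _root_.zero_apply]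
    simp [hu]
  · refine le_of_mul_le_mul_left ?_ hS0
    nlinarith

theorem EuclideanSpace.norm_toLp_sq {n : Type*} [Fintype n] (x : n → ℝ) :
    ‖(toLp 2 x : EuclideanSpace ℝ n)‖ ^ 2 = x ⬝ᵥ x := by
  rw [← real_inner_self_eq_norm_sq, EuclideanSpace.inner_toLp_toLp, star_trivial]

theorem Matrix.PosDef.dotProduct_self_le_specNorm_inv_mul {n : Type*} [Fintype n]
    [DecidableEq n] {P : Matrix n n ℝ} (hP : P.PosDef) (u : n → ℝ) :
    u ⬝ᵥ u ≤ specNorm P⁻¹ * (u ⬝ᵥ P *ᵥ u) := by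
  have hpos : (toEuclideanCLM (𝕜 := ℝ) (n := n) P⁻¹).IsPositive := by
    rw [← ContinuousLinearMap.isPositive_toLinearMap_iff, coe_toEuclideanCLM_eq_toEuclideanLin,
      isPositive_toEuclideanLin_iff]
    exact hP.inv.posSemidef
  have hdet := P.isUnit_iff_isUnit_det.mp hP.isUnit
  have hinv : Function.LeftInverse (toEuclideanCLM (𝕜 := ℝ) (n := n) P⁻¹)
      (toEuclideanCLM (𝕜 := ℝ) (n := n) P) := fun x => by
    rw [← mul_apply_eq_comp, ← map_mul, nonsing_inv_mul _ hdet, map_one, one_apply_eq_self]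
  have key := hpos.norm_sq_le_opNorm_mul_inner hinv (toLp 2 u)
  rw [EuclideanSpace.norm_toLp_sq, toEuclideanCLM_toLp, EuclideanSpace.inner_toLp_toLp,
    star_trivial] at key
  exact key

theorem Matrix.fromBlocks_transpose_neg_mulVec_sumElim_dotProduct {m n R : Type*} [Fintype m]
    [Fintype n] [CommRing R] (A : Matrix m m R) (B : Matrix n m R) (D : Matrix n n R)
    (u : m → R) (v : n → R) :
    fromBlocks A Bᵀ B (-D) *ᵥ Sum.elim u v ⬝ᵥ Sum.elim u (-v) = u ⬝ᵥ A *ᵥ u + v ⬝ᵥ D *ᵥ v := by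
  simp only [fromBlocks_mulVec, Sum.elim_comp_inl, Sum.elim_comp_inr, sumElim_dotProduct_sumElim,
    add_dotProduct, neg_mulVec, neg_dotProduct, dotProduct_neg, mulVec_transpose]
  rw [← dotProduct_mulVec, dotProduct_comm (B *ᵥ u), dotProduct_comm (A *ᵥ u),
    dotProduct_comm (D *ᵥ v)]
  ring

theorem Matrix.isUnit_and_specNorm_inv_le_of_norm_le {n : Type*} [Fintype n] [DecidableEq n]
    {M : Matrix n n ℝ} {c : ℝ} (hc : 0 ≤ c)
    (h : ∀ x : n → ℝ,
      ‖(toLp 2 x : EuclideanSpace ℝ n)‖ ≤ c * ‖(toLp 2 (M *ᵥ x) : EuclideanSpace ℝ n)‖) :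
    IsUnit M ∧ specNorm M⁻¹ ≤ c := by
  have hM : IsUnit M := by
    refine mulVec_injective_iff_isUnit.mp fun x y hxy => ?_
    have := h (x - y)
    rw [mulVec_sub, hxy, sub_self, toLp_zero, norm_zero, mul_zero, norm_le_zero_iff,
      toLp_eq_zero] at this
    exact sub_eq_zero.mp this
  refine ⟨hM, ContinuousLinearMap.opNorm_le_bound _ hc fun y => ?_⟩
  have hdet := M.isUnit_iff_isUnit_det.mp hM
  simpa [toLpLin_apply, mulVec_mulVec, mul_nonsing_inv _ hdet] using h (M⁻¹ *ᵥ ofLp y)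

theorem Matrix.PosDef.norm_le_max_specNorm_inv_mul_norm_fromBlocks_mulVec {m n : Type*}
    [Fintype m] [Fintype n] [DecidableEq m] [DecidableEq n] {V : Matrix m m ℝ}
    {W : Matrix n n ℝ} (hV : V.PosDef) (hW : W.PosDef) (G : Matrix n m ℝ) (x : m ⊕ n → ℝ) :
    ‖(toLp 2 x : EuclideanSpace ℝ (m ⊕ n))‖ ≤ max (specNorm V⁻¹) (specNorm W⁻¹) *
      ‖(toLp 2 (fromBlocks V Gᵀ G (-W) *ᵥ x) : EuclideanSpace ℝ (m ⊕ n))‖ := by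
  obtain ⟨u, v, rfl⟩ : ∃ u v, x = Sum.elim u v := ⟨_, _, (Sum.elim_comp_inl_inr x).symm⟩
  set c := max (specNorm V⁻¹) (specNorm W⁻¹)
  set X := ‖(toLp 2 (Sum.elim u v) : EuclideanSpace ℝ (m ⊕ n))‖
  set Y := ‖(toLp 2 (fromBlocks V Gᵀ G (-W) *ᵥ Sum.elim u v) : EuclideanSpace ℝ (m ⊕ n))‖
  have hc : 0 ≤ c := (norm_nonneg _).trans (le_max_left _ _)
  have hflip : ‖(toLp 2 (Sum.elim u (-v)) : EuclideanSpace ℝ (m ⊕ n))‖ = X := by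
    rw [← sq_eq_sq₀ (norm_nonneg _) (norm_nonneg _), EuclideanSpace.norm_toLp_sq,
      EuclideanSpace.norm_toLp_sq, sumElim_dotProduct_sumElim, sumElim_dotProduct_sumElim,
      neg_dotProduct, dotProduct_neg, neg_neg]
  have hX : X ^ 2 ≤ c * (X * Y) := calc
    X ^ 2 = u ⬝ᵥ u + v ⬝ᵥ v := by
      rw [EuclideanSpace.norm_toLp_sq, sumElim_dotProduct_sumElim]
    _ ≤ specNorm V⁻¹ * (u ⬝ᵥ V *ᵥ u) + specNorm W⁻¹ * (v ⬝ᵥ W *ᵥ v) :=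
        add_le_add (hV.dotProduct_self_le_specNorm_inv_mul u)
          (hW.dotProduct_self_le_specNorm_inv_mul v)
    _ ≤ c * (u ⬝ᵥ V *ᵥ u + v ⬝ᵥ W *ᵥ v) := by
      have hVu : 0 ≤ u ⬝ᵥ V *ᵥ u := by simpa using hV.posSemidef.dotProduct_mulVec_nonneg u
      have hWv : 0 ≤ v ⬝ᵥ W *ᵥ v := by simpa using hW.posSemidef.dotProduct_mulVec_nonneg v
      rw [mul_add]
      gcongr
      exacts [le_max_left _ _, le_max_right _ _]
    _ = c * ⟪(toLp 2 (Sum.elim u (-v)) : EuclideanSpace ℝ (m ⊕ n)),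
          toLp 2 (fromBlocks V Gᵀ G (-W) *ᵥ Sum.elim u v)⟫ := by
      rw [EuclideanSpace.inner_toLp_toLp, star_trivial,
        fromBlocks_transpose_neg_mulVec_sumElim_dotProduct]
    _ ≤ c * (X * Y) := by
      rw [← hflip]
      exact mul_le_mul_of_nonneg_left (real_inner_le_norm _ _) hc
  have hcY : 0 ≤ c * Y := mul_nonneg hc (norm_nonneg _)
  nlinarith [norm_nonneg (toLp 2 (Sum.elim u v) : EuclideanSpace ℝ (m ⊕ n))]

/-- For V, W symmetric positive definite and G arbitrary,
M = [[V, Gᵀ],[G, −W]] is invertible and ‖M⁻¹‖₂ ≤ max{‖V⁻¹‖₂, ‖W⁻¹‖₂}. -/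
theorem inv_norm_stabilized_saddle (a b : ℕ)
    (V : Matrix (Fin a) (Fin a) ℝ) (W : Matrix (Fin b) (Fin b) ℝ)
    (G : Matrix (Fin b) (Fin a) ℝ)
    (hV : V.PosDef) (hW : W.PosDef) :
    IsUnit (Matrix.fromBlocks V Gᵀ G (-W)) ∧
      specNorm (Matrix.fromBlocks V Gᵀ G (-W))⁻¹ ≤
        max (specNorm V⁻¹) (specNorm W⁻¹) :=
  isUnit_and_specNorm_inv_le_of_norm_le ((norm_nonneg _).trans (le_max_left _ _))
    (hV.norm_le_max_specNorm_inv_mul_norm_fromBlocks_mulVec hW G)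
end

section
/- Let x* minimize q(x) = ½xᵀQx + cᵀx over Ω̄ = [−1,1]^n subject to ‖Ax − b‖₂ = χ, where χ = min_{ξ∈Ω̄} ‖Aξ − b‖₂, and let x*_ω be the unique minimizer of q_ω(x) = q(x) + (ω/2)‖x‖₂² + (1/(2ω))‖Ax − b‖₂² over Ω̄. Then q(x*_ω) ≤ q(x*) + (ω/2)·‖x*‖₂². -/
open Matrix

/-- the regularized minimizer nearly preserves the objective:
q(x*_ω) ≤ q(x*) + (ω/2)‖x*‖₂². -/
theorem regularized_objective_bound (n m : ℕ)
    (Q : Matrix (Fin n) (Fin n) ℝ) (c : Fin n → ℝ)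
    (A : Matrix (Fin m) (Fin n) ℝ) (b : Fin m → ℝ)
    (hQ : Q.PosSemidef) (ω : ℝ) (hω : 0 < ω)
    (q : (Fin n → ℝ) → ℝ)
    (hq : ∀ x, q x = (1/2) * (x ⬝ᵥ Q.mulVec x) + c ⬝ᵥ x)
    (res : (Fin n → ℝ) → ℝ)
    (hres : ∀ x, res x = Real.sqrt (∑ i, (A.mulVec x - b) i ^ 2))
    (qω : (Fin n → ℝ) → ℝ)
    (hqω : ∀ x, qω x = q x + (ω/2) * (∑ i, (x i)^2) + (1/(2*ω)) * (res x)^2)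
    (χ : ℝ)
    (hχ_lb : ∀ ξ, (∀ i, |ξ i| ≤ 1) → χ ≤ res ξ)
    (xstar : Fin n → ℝ) (hxstar_box : ∀ i, |xstar i| ≤ 1)
    (hxstar_res : res xstar = χ)
    (hxstar_min : ∀ y, (∀ i, |y i| ≤ 1) → res y = χ → q xstar ≤ q y)
    (xω : Fin n → ℝ) (hxω_box : ∀ i, |xω i| ≤ 1)
    (hxω_min : ∀ y, (∀ i, |y i| ≤ 1) → qω xω ≤ qω y) :
    q xω ≤ q xstar + (ω/2) * (∑ i, (xstar i)^2) := by
  have hχ0 : 0 ≤ χ := by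
    rw [← hxstar_res, hres]; exact Real.sqrt_nonneg _
  have h1 : qω xω ≤ qω xstar := hxω_min xstar hxstar_box
  rw [hqω, hqω, hxstar_res] at h1
  have h2 : χ ≤ res xω := hχ_lb xω hxω_box
  have h3 : χ^2 ≤ (res xω)^2 := by nlinarith
  have h4 : 0 ≤ ∑ i, (xω i)^2 := Finset.sum_nonneg fun i _ => sq_nonneg _
  have h5 : 0 < 1/(2*ω) := by positivity
  nlinarith
end

section
/- With the setup of the previous statement: ‖Ax*_ω − b‖₂² ≤ χ² + 2ω·(q(x*) − q(x*_ω)) + ω²·‖x*‖₂², and consequently ‖Ax*_ω − b‖₂ ≤ √(χ² + ω·(4C_q + n)) ≤ χ + √ω·√(4C_q + n) whenever |q| ≤ C_q on Ω̄ and ‖x*‖₂² ≤ n. -/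
open Matrix

/-- residual bound for the regularized minimizer. -/
theorem regularized_residual_bound (n m : ℕ)
    (Q : Matrix (Fin n) (Fin n) ℝ) (c : Fin n → ℝ)
    (A : Matrix (Fin m) (Fin n) ℝ) (b : Fin m → ℝ)
    (hQ : Q.PosSemidef) (ω : ℝ) (hω : 0 < ω) (hω1 : ω ≤ 1)
    (q : (Fin n → ℝ) → ℝ)
    (hq : ∀ x, q x = (1/2) * (x ⬝ᵥ Q.mulVec x) + c ⬝ᵥ x)
    (res : (Fin n → ℝ) → ℝ)
    (hres : ∀ x, res x = Real.sqrt (∑ i, (A.mulVec x - b) i ^ 2))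
    (qω : (Fin n → ℝ) → ℝ)
    (hqω : ∀ x, qω x = q x + (ω/2) * (∑ i, (x i)^2) + (1/(2*ω)) * (res x)^2)
    (χ : ℝ)
    (hχ_lb : ∀ ξ, (∀ i, |ξ i| ≤ 1) → χ ≤ res ξ)
    (xstar : Fin n → ℝ) (hxstar_box : ∀ i, |xstar i| ≤ 1)
    (hxstar_res : res xstar = χ)
    (hxstar_min : ∀ y, (∀ i, |y i| ≤ 1) → res y = χ → q xstar ≤ q y)
    (xω : Fin n → ℝ) (hxω_box : ∀ i, |xω i| ≤ 1)
    (hxω_min : ∀ y, (∀ i, |y i| ≤ 1) → qω xω ≤ qω y)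
    (Cq : ℝ) (hCq : ∀ ξ, (∀ i, |ξ i| ≤ 1) → |q ξ| ≤ Cq)
    (hxstar_norm : (∑ i, (xstar i)^2) ≤ (n : ℝ)) :
    (res xω)^2 ≤ χ^2 + 2*ω*(q xstar - q xω) + ω^2 * (∑ i, (xstar i)^2) ∧
      res xω ≤ Real.sqrt (χ^2 + ω*(4*Cq + n)) ∧
      Real.sqrt (χ^2 + ω*(4*Cq + n)) ≤ χ + Real.sqrt ω * Real.sqrt (4*Cq + n) := by

  have hχ : 0 ≤ χ := by
    rw [← hxstar_res, hres]; exact Real.sqrt_nonneg _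
  have hresω : 0 ≤ res xω := by rw [hres]; exact Real.sqrt_nonneg _
  have hSω : 0 ≤ ∑ i, (xω i)^2 := Finset.sum_nonneg fun i _ => sq_nonneg _
  have hSs : 0 ≤ ∑ i, (xstar i)^2 := Finset.sum_nonneg fun i _ => sq_nonneg _
  have h1 : qω xω ≤ qω xstar := hxω_min xstar hxstar_box
  rw [hqω, hqω, hxstar_res] at h1
  have h2 := mul_le_mul_of_nonneg_left h1 (by positivity : (0:ℝ) ≤ 2*ω)
  have hinv : 2*ω*(1/(2*ω)) = 1 := by field_simp
  have key : (res xω)^2 ≤ χ^2 + 2*ω*(q xstar - q xω) + ω^2 * (∑ i, (xstar i)^2) := by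
    nlinarith [h2, hinv, hSω, hSs]
  refine ⟨key, ?_, ?_⟩
  · have hCq1 : |q xstar| ≤ Cq := hCq xstar hxstar_box
    have hCq2 : |q xω| ≤ Cq := hCq xω hxω_box
    obtain ⟨hA, hB⟩ := abs_le.mp hCq1
    obtain ⟨hC, hD⟩ := abs_le.mp hCq2
    have hb : (res xω)^2 ≤ χ^2 + ω*(4*Cq + n) := by
      nlinarith [key, hxstar_norm, hSs, hω.le, hω1,
        mul_le_mul_of_nonneg_left hxstar_norm (by positivity : (0:ℝ) ≤ ω^2),
        mul_le_mul_of_nonneg_right hω1 (mul_nonneg hω.le hSs),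
        mul_le_mul_of_nonneg_left hxstar_norm hω.le]
    calc res xω = Real.sqrt ((res xω)^2) := by rw [Real.sqrt_sq hresω]
      _ ≤ Real.sqrt (χ^2 + ω*(4*Cq + n)) := Real.sqrt_le_sqrt hb
  · have hCq0 : 0 ≤ Cq := (abs_nonneg _).trans (hCq xstar hxstar_box)
    have h4 : 0 ≤ 4*Cq + n := by positivity
    have hR : 0 ≤ χ + Real.sqrt ω * Real.sqrt (4*Cq + n) := by positivity
    have hsq1 : Real.sqrt ω ^ 2 = ω := Real.sq_sqrt hω.le
    have hsq2 : Real.sqrt (4*Cq + n) ^ 2 = 4*Cq + n := Real.sq_sqrt h4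
    have hX : χ^2 + ω*(4*Cq + n) ≤ (χ + Real.sqrt ω * Real.sqrt (4*Cq + n))^2 := by
      nlinarith [mul_nonneg (mul_nonneg hχ (Real.sqrt_nonneg ω)) (Real.sqrt_nonneg (4*Cq + n))]
    calc Real.sqrt (χ^2 + ω*(4*Cq + n)) ≤ Real.sqrt ((χ + Real.sqrt ω * Real.sqrt (4*Cq + n))^2) :=
          Real.sqrt_le_sqrt hX
      _ = χ + Real.sqrt ω * Real.sqrt (4*Cq + n) := Real.sqrt_sq hR
end
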